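/- Condition 1 (if x,y ∈ A ⊂ B, x ∈ c(A), and y ∈ c(B), then x ∈ c(B)) strictly strengthens Sen's β: every choice correspondence satisfying Condition 1 satisfies β, but there exists a choice correspondence on a three-element set satisfying β and failing Condition 1 (e.g., c({x,y}) = {x}, c({x,z}) = {x}, c({y,z}) = {y}, c({x,y,z}) = {y}). -/
import Mathlib


open Set

variable {X : Type*}

/-- A complete and transitive binary relation (weak order). -/
def WeakOrd (R : X → X → Prop) : Prop :=
  (∀ x y, R x y ∨ R y x) ∧ (∀ ⦃x y z⦄, R x y → R y z → R x z)

/-- A linear order: an antisymmetric weak order. -/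
def LinOrdRel (L : X → X → Prop) : Prop :=
  WeakOrd L ∧ ∀ ⦃x y⦄, L x y → L y x → x = y

/-- max(A,R): the R-maximal elements of A. -/
def maxSet (R : X → X → Prop) (A : Set X) : Set X := {x ∈ A | ∀ y ∈ A, R x y}

/-- m is the L-minimum of S: every member of S is L-above m. -/
def IsMinOf (L : X → X → Prop) (S : Set X) (m : X) : Prop := m ∈ S ∧ ∀ y ∈ S, L y m

/-- A choice correspondence: nonempty-valued and c(A) ⊆ A on every menu. -/
def ChoiceCorr (c : Set X → Set X) : Prop :=
  ∀ ⦃A : Set X⦄, A.Nonempty → (c A).Nonempty ∧ c A ⊆ A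

/-- Minimal compromise representation by a weak order R and linear order L. -/
def MCRep (c : Set X → Set X) (R L : X → X → Prop) : Prop :=
  WeakOrd R ∧ LinOrdRel L ∧
  ∀ ⦃A : Set X⦄, A.Nonempty →
    ((∃ a, maxSet R A = {a}) → c A = maxSet R A) ∧
    (¬ (∃ a, maxSet R A = {a}) →
      ∃ m, IsMinOf L (maxSet R A) m ∧ c A = maxSet R A \ {m})

/-- r^c(A): elements whose removal changes choice (with r^c(A) = A on singletons). -/
def rC (c : Set X → Set X) (A : Set X) : Set X :=
  {x ∈ A | (∃ a, A = {a}) ∨ c (A \ {x}) ≠ c A}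

/-- Condition 1. -/
def Cond1 (c : Set X → Set X) : Prop :=
  ∀ ⦃A B : Set X⦄ ⦃x y : X⦄, A.Nonempty → A ⊂ B → x ∈ A → y ∈ A →
    x ∈ c A → y ∈ c B → x ∈ c B

/-- Condition 2. -/
def Cond2 (c : Set X → Set X) : Prop :=
  ∀ ⦃A B : Set X⦄ ⦃x y : X⦄, A.Nonempty → A ⊂ B → x ∈ A → y ∈ A →
    x ∈ rC c A → y ∈ rC c B → x ∈ rC c B

/-- Condition 3. -/
def Cond3 (c : Set X → Set X) : Prop :=
  ∀ ⦃A : Set X⦄, (∃ x y, x ∈ A ∧ y ∈ A ∧ x ≠ y) → ∃ x ∈ A, x ∉ c A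

/-- Condition 4. -/
def Cond4 (c : Set X → Set X) : Prop :=
  ∀ ⦃A : Set X⦄ ⦃x y : X⦄, A.Nonempty → x ∈ A → x ∉ c A → y ∉ A →
    x ∈ c (A ∪ {y}) → y ∉ c (A ∪ {y})

/-- Condition 5. -/
def Cond5 (c : Set X → Set X) : Prop :=
  ∀ ⦃A B : Set X⦄, A.Nonempty → B ⊆ rC c A → (∃ x y, x ∈ B ∧ y ∈ B ∧ x ≠ y) →
    ∃ x, x ∉ c B ∧ B = c B ∪ {x}

/-- Sen's β axiom. -/
def Beta {Y : Type*} (c : Set Y → Set Y) : Prop :=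
  ∀ ⦃A B : Set Y⦄ ⦃x y : Y⦄, A.Nonempty → A ⊂ B → x ∈ A → y ∈ A →
    x ∈ c A → y ∈ c A → y ∈ c B → x ∈ c B

open Classical in
noncomputable def cEx : Set (Fin 3) → Set (Fin 3) := fun A =>
  if A = {0, 1, 2} then {1}
  else if A = {1, 2} then {1}
  else if (0 : Fin 3) ∈ A then {0}
  else if (1 : Fin 3) ∈ A then {1}
  else A

lemma cEx_sub (A : Set (Fin 3)) : cEx A ⊆ A := by
  unfold cEx
  split_ifs with h1 h2 h3 h4
  · subst h1; simp
  · subst h2; simp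
  · simpa using h3
  · simpa using h4
  · exact le_refl _

lemma cEx_subsingleton {A : Set (Fin 3)} : ∀ x ∈ cEx A, ∀ y ∈ cEx A, x = y := by
  unfold cEx
  split_ifs with h1 h2 h3 h4
  · simp
  · simp
  · simp
  · simp
  · intro x hx y hy
    have hx2 : x = 2 := by
      have h0 : x ≠ 0 := fun e => h3 (e ▸ hx)
      have h1' : x ≠ 1 := fun e => h4 (e ▸ hx)
      omega
    have hy2 : y = 2 := by
      have h0 : y ≠ 0 := fun e => h3 (e ▸ hy)
      have h1' : y ≠ 1 := fun e => h4 (e ▸ hy)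
      omega
    rw [hx2, hy2]

lemma cEx_nonempty {A : Set (Fin 3)} (hA : A.Nonempty) : (cEx A).Nonempty := by
  unfold cEx
  split_ifs with h1 h2 h3 h4
  · exact ⟨1, rfl⟩
  · exact ⟨1, rfl⟩
  · exact ⟨0, rfl⟩
  · exact ⟨1, rfl⟩
  · exact hA

/-- Condition 1 strictly strengthens β. -/
theorem cond1_strictly_strengthens_beta :
    (∀ (Y : Type) (c : Set Y → Set Y), ChoiceCorr c → Cond1 c → Beta c) ∧
    (∃ c : Set (Fin 3) → Set (Fin 3), ChoiceCorr c ∧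
      c {0, 1} = {0} ∧ c {0, 2} = {0} ∧ c {1, 2} = {1} ∧ c {0, 1, 2} = {1} ∧
      Beta c ∧ ¬ Cond1 c) := by
  constructor
  · intro Y c _ h1 A B x y hA hAB hxA hyA hxcA _ hycB
    exact h1 hA hAB hxA hyA hxcA hycB
  · refine ⟨cEx, ?_, ?_, ?_, ?_, ?_, ?_, ?_⟩
    · intro A hA
      exact ⟨cEx_nonempty hA, cEx_sub A⟩
    · -- c {0,1} = {0}
      have h1 : ({0, 1} : Set (Fin 3)) ≠ {0, 1, 2} := by
        intro h
        have : (2 : Fin 3) ∈ ({0, 1} : Set (Fin 3)) := by rw [h]; simp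
        simp at this
      have h2 : ({0, 1} : Set (Fin 3)) ≠ {1, 2} := by
        intro h
        have : (0 : Fin 3) ∈ ({1, 2} : Set (Fin 3)) := by rw [← h]; simp
        simp at this
      simp [cEx, h1, h2]
    · -- c {0,2} = {0}
      have h1 : ({0, 2} : Set (Fin 3)) ≠ {0, 1, 2} := by
        intro h
        have : (1 : Fin 3) ∈ ({0, 2} : Set (Fin 3)) := by rw [h]; simp
        simp at this
      have h2 : ({0, 2} : Set (Fin 3)) ≠ {1, 2} := by
        intro h
        have : (0 : Fin 3) ∈ ({1, 2} : Set (Fin 3)) := by rw [← h]; simp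
        simp at this
      simp [cEx, h1, h2]
    · -- c {1,2} = {1}
      have h1 : ({1, 2} : Set (Fin 3)) ≠ {0, 1, 2} := by
        intro h
        have : (0 : Fin 3) ∈ ({1, 2} : Set (Fin 3)) := by rw [h]; simp
        simp at this
      simp [cEx, h1]
    · simp [cEx]
    · -- Beta
      intro A B x y hA hAB hxA hyA hxcA hycA hycB
      have : x = y := cEx_subsingleton x hxcA y hycA
      rwa [this]
    · -- ¬ Cond1
      intro h
      have h01 : ({0, 1} : Set (Fin 3)) ≠ {0, 1, 2} := by
        intro h
        have : (2 : Fin 3) ∈ ({0, 1} : Set (Fin 3)) := by rw [h]; simp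
        simp at this
      have h01' : ({0, 1} : Set (Fin 3)) ≠ {1, 2} := by
        intro h
        have : (0 : Fin 3) ∈ ({1, 2} : Set (Fin 3)) := by rw [← h]; simp
        simp at this
      have hcA : cEx {0, 1} = {0} := by simp [cEx, h01, h01']
      have hcB : cEx {0, 1, 2} = {1} := by simp [cEx]
      have hsub : ({0, 1} : Set (Fin 3)) ⊂ {0, 1, 2} := by
        constructor
        · intro a ha; simp at ha ⊢; tauto
        · intro hle
          have : (2 : Fin 3) ∈ ({0, 1} : Set (Fin 3)) := hle (by simp)
          simp at this
      have h0 : (0 : Fin 3) ∈ cEx {0, 1, 2} :=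
        h (A := {0, 1}) (B := {0, 1, 2}) (x := 0) (y := 1) ⟨0, by simp⟩ hsub
          (by simp) (by simp) (by rw [hcA]; simp) (by rw [hcB]; simp)
      rw [hcB] at h0
      simp at h0
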